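/- arXiv:1404.5106 — 3 statements merged into one kernel-verified Lean document; each statement's English description precedes it below -/
import Mathlib

section
/- For all natural numbers n and k, the sum over i from 0 to k of C(n+2i, i) equals the alternating sum over j from 0 to floor(k/2) of (-1)^j * C(n+2k-j+1, k-2j), where C(a,b) denotes the binomial coefficient. (Since the right-hand side is an alternating sum, state it over the integers.) -/
/-!
Write `f m k = ∑ⱼ (-1)ʲ C(m - j, k - 2j)`, so that the right-hand side is `f (n + 2k + 1) k`.
Shifting `j` by one gives `f (m + 1) (k + 2) + f m k = C(m + 1, k + 2)`, and this two-step
recursion together with Pascal's rule yields `f (m + 2) (k + 1) = f m k + C(m + 1, k + 1)`.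
For `m = n + 2k + 1` the increment is `C(n + 2(k + 1), k + 1)`, the next term of the left-hand side.
-/

open Finset

def altChooseSum (m k : ℕ) : ℤ :=
  ∑ j ∈ range (k / 2 + 1), (-1) ^ j * ((m - j).choose (k - 2 * j) : ℤ)

@[simp]
lemma altChooseSum_zero_right (m : ℕ) : altChooseSum m 0 = 1 := by
  simp [altChooseSum]

@[simp]
lemma altChooseSum_one_right (m : ℕ) : altChooseSum m 1 = m := by
  simp [altChooseSum]

lemma altChooseSum_add_two_add (m k : ℕ) :
    altChooseSum (m + 1) (k + 2) + altChooseSum m k = (m + 1).choose (k + 2) := by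
  have hrange : (k + 2) / 2 + 1 = k / 2 + 1 + 1 := by omega
  have hshift : ∀ j ∈ range (k / 2 + 1),
      (-1 : ℤ) ^ (j + 1) * ((m + 1 - (j + 1)).choose (k + 2 - 2 * (j + 1)) : ℤ) =
        -((-1) ^ j * ((m - j).choose (k - 2 * j) : ℤ)) := by
    intro j _
    rw [show m + 1 - (j + 1) = m - j by omega, show k + 2 - 2 * (j + 1) = k - 2 * j by omega]
    ring
  rw [altChooseSum, hrange, sum_range_succ', sum_congr rfl hshift, sum_neg_distrib]
  simp [altChooseSum]

lemma altChooseSum_succ_right (n : ℕ) :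
    ∀ k, altChooseSum (n + k + 2) (k + 1) = altChooseSum (n + k) k + (n + k + 1).choose (k + 1)
  | 0 => by simp; ring
  | 1 => by
    have h : altChooseSum (n + 3) 2 + 1 = (n + 3).choose 2 := by
      simpa using altChooseSum_add_two_add (n + 2) 0
    rw [Nat.choose_succ_succ' (n + 2) 1, Nat.choose_one_right] at h
    rw [altChooseSum_one_right]
    show altChooseSum (n + 3) 2 = ((n + 1 : ℕ) : ℤ) + (n + 2).choose 2
    push_cast at h ⊢
    linarith
  | k + 2 => by
    have ih := altChooseSum_succ_right (n + 1) k
    have rec₁ := altChooseSum_add_two_add (n + k + 3) (k + 1)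
    have rec₂ := altChooseSum_add_two_add (n + k + 1) k
    have pascal : (n + k + 4).choose (k + 3) =
        (n + k + 2).choose (k + 1) + (n + k + 2).choose (k + 2) + (n + k + 3).choose (k + 3) := by
      rw [Nat.choose_succ_succ' (n + k + 3), Nat.choose_succ_succ' (n + k + 2) (k + 1)]
    rw [show n + 1 + k = n + k + 1 by ring] at ih
    rw [show n + (k + 2) + 2 = n + k + 3 + 1 by ring, show n + (k + 2) = n + k + 1 + 1 by ring,
      eq_sub_of_add_eq rec₁, eq_sub_of_add_eq rec₂, ih, pascal]
    push_cast
    ring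

theorem hockey_stick_pascal (n k : ℕ) :
    (∑ i ∈ Finset.range (k + 1), (Nat.choose (n + 2 * i) i : ℤ)) =
      ∑ j ∈ Finset.range (k / 2 + 1),
        (-1 : ℤ) ^ j * Nat.choose (n + 2 * k - j + 1) (k - 2 * j) := by
  have rhs_eq : ∀ m, ∑ j ∈ range (m / 2 + 1),
      (-1 : ℤ) ^ j * Nat.choose (n + 2 * m - j + 1) (m - 2 * j) = altChooseSum (n + 2 * m + 1) m := by
    refine fun m => sum_congr rfl fun j hj => ?_
    rw [show n + 2 * m - j + 1 = n + 2 * m + 1 - j by grind]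
  rw [rhs_eq]
  induction k with
  | zero => simp
  | succ k ih =>
    have step := altChooseSum_succ_right (n + k + 1) k
    rw [show n + k + 1 + k = n + 2 * k + 1 by ring] at step
    rw [sum_range_succ, ih, show n + 2 * (k + 1) + 1 = n + 2 * k + 1 + 2 by ring, step,
      show n + 2 * (k + 1) = n + 2 * k + 1 + 1 by ring]
end

section
/- For all natural numbers n and k, the sum over i from 0 to k of T(n+i, n) equals the alternating sum over s from 0 to floor(k/2) of (-1)^s * T(n+k+1, n+2s+1), where T(m, j) denotes the trinomial coefficient, i.e., the coefficient of x^(m+j) in the expansion of the polynomial (1 + x + x^2)^m. (Since the right-hand side is an alternating sum, state it over the integers.) -/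
/-!
Coefficient extraction from `(1 + x + x²)^(m+1) = (1 + x + x²)^m (1 + x + x²)` gives the Pascal-type
rule `T(m+1, j) = T(m, j-1) + T(m, j) + T(m, j+1)`. Applied to the odd entries
`T(m+1, n+2s+1)` of a row with alternating signs, the even entries `T(m, n+2s)` telescope down to
`T(m, n)`, and what remains is the alternating sum of the odd entries of row `m`. So these
alternating sums grow by exactly `T(n+k, n)` from row `n+k` to row `n+k+1`, which is the hockey
stick; all boundary terms vanish because `T(m, j) = 0` for `j > m`.
-/

/-- The trinomial coefficient `T m j`: the coefficient of `x^(m+j)` in `(1 + x + x^2)^m`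
(zero when `m + j < 0`). -/
noncomputable def trinom (m : ℕ) (j : ℤ) : ℤ :=
  if 0 ≤ (m : ℤ) + j then
    ((1 + Polynomial.X + Polynomial.X ^ 2 : Polynomial ℤ) ^ m).coeff ((m : ℤ) + j).toNat
  else 0

open Polynomial Finset

theorem sum_range_neg_one_pow_mul_add_succ {R : Type*} [CommRing R] (a : ℕ → R) (K : ℕ) :
    ∑ s ∈ range K, (-1) ^ s * (a s + a (s + 1)) = a 0 - (-1) ^ K * a K := by
  calc ∑ s ∈ range K, (-1) ^ s * (a s + a (s + 1))
      = -∑ s ∈ range K, ((-1) ^ (s + 1) * a (s + 1) - (-1) ^ s * a s) := by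
        rw [← sum_neg_distrib]
        exact sum_congr rfl fun s _ => by ring
    _ = a 0 - (-1) ^ K * a K := by
        rw [sum_range_sub (fun s => (-1 : R) ^ s * a s)]
        ring

theorem trinom_succ (m : ℕ) (j : ℤ) :
    trinom (m + 1) j = trinom m (j - 1) + trinom m j + trinom m (j + 1) := by
  have hP : (1 + X + X ^ 2 : ℤ[X]) ^ (m + 1) =
      (1 + X + X ^ 2) ^ m * X ^ 2 + (1 + X + X ^ 2) ^ m * X ^ 1 + (1 + X + X ^ 2) ^ m := by ring
  unfold trinom
  rw [hP]
  simp only [coeff_add, coeff_mul_X_pow']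
  grind

theorem trinom_eq_zero_of_lt {m : ℕ} {j : ℤ} (h : (m : ℤ) < j) : trinom m j = 0 := by
  unfold trinom
  split_ifs
  · refine coeff_eq_zero_of_natDegree_lt ?_
    calc ((1 + X + X ^ 2 : ℤ[X]) ^ m).natDegree ≤ m * 2 := by
          refine natDegree_pow_le_of_le m ?_
          compute_degree!
      _ < ((m : ℤ) + j).toNat := by omega
  · rfl

theorem sum_alternating_trinom_succ (m : ℕ) (j : ℤ) (K : ℕ) :
    ∑ s ∈ range K, (-1 : ℤ) ^ s * trinom (m + 1) (j + 2 * s + 1) =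
      trinom m j - (-1) ^ K * trinom m (j + 2 * K) +
        ∑ s ∈ range K, (-1 : ℤ) ^ s * trinom m (j + 2 * s + 1) := by
  set a : ℕ → ℤ := fun s => trinom m (j + 2 * s) with ha
  have hrow (s : ℕ) :
      trinom (m + 1) (j + 2 * s + 1) = a s + a (s + 1) + trinom m (j + 2 * s + 1) := by
    rw [trinom_succ, ha]
    push_cast
    ring_nf
  calc ∑ s ∈ range K, (-1 : ℤ) ^ s * trinom (m + 1) (j + 2 * s + 1)
      = ∑ s ∈ range K, (-1) ^ s * (a s + a (s + 1)) +
          ∑ s ∈ range K, (-1 : ℤ) ^ s * trinom m (j + 2 * s + 1) := by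
        rw [← sum_add_distrib]
        exact sum_congr rfl fun s _ => by rw [hrow]; ring
    _ = _ := by rw [sum_range_neg_one_pow_mul_add_succ, ha]; simp

theorem sum_range_trinom_eq_sum_alternating (n k K : ℕ) (hK : k ≤ 2 * K) :
    ∑ i ∈ range k, trinom (n + i) n =
      ∑ s ∈ range K, (-1 : ℤ) ^ s * trinom (n + k) (n + 2 * s + 1) := by
  induction k with
  | zero =>
    refine (sum_eq_zero fun s _ => ?_).symm
    rw [trinom_eq_zero_of_lt (by push_cast; omega), mul_zero]
  | succ k ih =>
    rw [sum_range_succ, ih (by omega), ← add_assoc, sum_alternating_trinom_succ,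
      trinom_eq_zero_of_lt (m := n + k) (j := n + 2 * K) (by push_cast; omega)]
    ring

theorem hockey_stick_trinomial (n k : ℕ) :
    (∑ i ∈ Finset.range (k + 1), trinom (n + i) (n : ℤ)) =
      ∑ s ∈ Finset.range (k / 2 + 1),
        (-1 : ℤ) ^ s * trinom (n + k + 1) ((n : ℤ) + 2 * s + 1) :=
  sum_range_trinom_eq_sum_alternating n (k + 1) (k / 2 + 1) (by omega)
end

section
/- For all natural numbers n and k, the sum over i from 0 to k of [ the sum over all pairs of natural numbers (r, s) with 2r + s = 2n + i and r ≥ n of the multinomial coefficient (n+i)! / (r! · s! · (r-n)!) ] equals the alternating sum over j from 0 to floor(k/2) of (-1)^j times [ the sum over all pairs of natural numbers (r, s) with 2r + s = 2n + k + 2j + 2 and r ≥ n + 2j + 1 of the multinomial coefficient (n+k+1)! / (r! · s! · (r-n-2j-1)!) ]. (Since the right-hand side is an alternating sum, state it over the integers.) -/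
/-!
Both sides are sums of trinomial coefficients `T(m, a) = [x ^ (m + a)] (1 + x + x²) ^ m`:
expanding `(x² + (1 + x)) ^ m` binomially writes `T(m, a)` as the sum of the multinomial
coefficients `m! / (r! s! (r - a)!)` over `2r + s = m + a`. The identity
`∑_{i ≤ k} T(n + i, n) = ∑_{j ≤ k} (-1)^j T(n + k + 1, n + 2j + 1)` follows by induction on `k`
from Pascal's rule `T(m + 1, a + 1) = T(m, a) + T(m, a + 1) + T(m, a + 2)`, and the terms with
`2j > k` vanish because `T(m, a) = 0` for `a > m`.
-/

open Polynomial Finset Nat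

theorem Nat.factorial_div_factorial_mul_factorial_mul_factorial (u s t : ℕ) :
    (u + s + t)! / (u ! * s ! * t !) = (u + s + t).choose u * (s + t).choose s := by
  refine Nat.div_eq_of_eq_mul_left (by positivity) ?_
  have h₁ := Nat.add_choose_mul_factorial_mul_factorial (s + t) u
  have h₂ := Nat.add_choose_mul_factorial_mul_factorial t s
  rw [add_comm t s] at h₂
  rw [add_comm (s + t) u, ← add_assoc] at h₁
  rw [← h₁, ← h₂]
  ring

theorem sum_filter_two_mul_add_eq {M : Type*} [AddCommMonoid M] (N a : ℕ) (f : ℕ → ℕ → M) :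
    ∑ p ∈ (range (N + 1) ×ˢ range (N + 1)).filter (fun p => 2 * p.1 + p.2 = N ∧ a ≤ p.1),
      f p.1 p.2 = ∑ r ∈ Icc a (N / 2), f r (N - 2 * r) := by
  have hset : (range (N + 1) ×ˢ range (N + 1)).filter (fun p => 2 * p.1 + p.2 = N ∧ a ≤ p.1) =
      (Icc a (N / 2)).image fun r => (r, N - 2 * r) := by
    ext ⟨r, s⟩
    simp only [mem_filter, mem_product, mem_range, mem_image, mem_Icc, Prod.mk.injEq]
    constructor
    · rintro ⟨-, hrs, har⟩
      exact ⟨r, ⟨har, by omega⟩, rfl, by omega⟩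
    · rintro ⟨r, ⟨har, hr⟩, rfl, rfl⟩
      omega
  rw [hset, sum_image fun r₁ _ r₂ _ h => congrArg Prod.fst h]

/-- The trinomial coefficient `T(m, a)`, i.e. the coefficient of `x ^ a` in `(x⁻¹ + 1 + x) ^ m`. -/
noncomputable def trinomialCoeff (m a : ℕ) : ℕ := ((1 + X + X ^ 2 : ℕ[X]) ^ m).coeff (m + a)

theorem trinomialCoeff_eq_zero_of_lt {m a : ℕ} (h : m < a) : trinomialCoeff m a = 0 :=
  coeff_eq_zero_of_natDegree_lt <| (natDegree_pow_le_of_le m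
    (show (1 + X + X ^ 2 : ℕ[X]).natDegree ≤ 2 by compute_degree!)).trans_lt (by omega)

theorem trinomialCoeff_succ_succ (m a : ℕ) :
    trinomialCoeff (m + 1) (a + 1) =
      trinomialCoeff m a + trinomialCoeff m (a + 1) + trinomialCoeff m (a + 2) := by
  have hpow : (1 + X + X ^ 2 : ℕ[X]) ^ (m + 1) =
      X ^ 2 * (1 + X + X ^ 2) ^ m + X * (1 + X + X ^ 2) ^ m + (1 + X + X ^ 2) ^ m := by ring
  rw [trinomialCoeff, hpow, show m + 1 + (a + 1) = m + a + 2 by ring, coeff_add, coeff_add,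
    coeff_X_pow_mul, coeff_X_mul]
  rfl

theorem trinomialCoeff_eq_sum_choose (m a : ℕ) :
    trinomialCoeff m a = ∑ r ∈ range (m + 1),
      m.choose r * if 2 * r ≤ m + a then (m - r).choose (m + a - 2 * r) else 0 := by
  rw [trinomialCoeff, show (1 + X + X ^ 2 : ℕ[X]) = X ^ 2 + (1 + X) by ring, add_pow,
    finsetSum_coeff]
  refine sum_congr rfl fun r _ => ?_
  rw [← C_eq_natCast, coeff_mul_C, ← pow_mul, mul_comm, coeff_X_pow_mul', mul_comm]
  split_ifs <;> simp [coeff_one_add_X_pow, mul_comm]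

theorem trinomialCoeff_eq_sum_multinomial (m a : ℕ) :
    trinomialCoeff m a =
      ∑ r ∈ Icc a ((m + a) / 2), m ! / (r ! * (m + a - 2 * r)! * (r - a)!) := by
  rw [trinomialCoeff_eq_sum_choose, ← sum_subset (s₁ := Icc a ((m + a) / 2))]
  · refine sum_congr rfl fun r hr => ?_
    have hr : a ≤ r ∧ 2 * r ≤ m + a := by simp only [mem_Icc] at hr; omega
    have h := factorial_div_factorial_mul_factorial_mul_factorial r (m + a - 2 * r) (r - a)
    rw [show r + (m + a - 2 * r) + (r - a) = m by omega,
      show m + a - 2 * r + (r - a) = m - r by omega] at h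
    rw [if_pos hr.2, h]
  · intro r hr
    simp only [mem_Icc, mem_range] at hr ⊢
    omega
  · intro r hr hr'
    simp only [mem_Icc, mem_range, not_and_or, not_le] at hr hr'
    split_ifs with h
    · rw [Nat.choose_eq_zero_of_lt (n := m - r) (by omega), mul_zero]
    · rw [mul_zero]

theorem sum_range_trinomialCoeff (n k : ℕ) :
    ∑ i ∈ range (k + 1), (trinomialCoeff (n + i) n : ℤ) =
      ∑ j ∈ range (k + 1), (-1) ^ j * (trinomialCoeff (n + k + 1) (n + 2 * j + 1) : ℤ) := by
  induction k with
  | zero =>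
    rw [sum_range_one, sum_range_one, trinomialCoeff_succ_succ,
      trinomialCoeff_eq_zero_of_lt (by omega : n < n + 1),
      trinomialCoeff_eq_zero_of_lt (by omega : n < n + 2)]
    simp
  | succ k ih =>
    let T (a : ℕ) : ℤ := trinomialCoeff (n + k + 1) a
    -- By Pascal's rule the outer terms telescope to `T n`, the middle ones give the sum for `k`.
    have hsplit (j : ℕ) : (-1) ^ j * (trinomialCoeff (n + (k + 1) + 1) (n + 2 * j + 1) : ℤ) =
        ((-1) ^ j * T (n + 2 * j) - (-1) ^ (j + 1) * T (n + 2 * (j + 1))) +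
          (-1) ^ j * T (n + 2 * j + 1) := by
      rw [← add_assoc n k 1, trinomialCoeff_succ_succ,
        show n + 2 * (j + 1) = n + 2 * j + 2 by ring]
      push_cast [T, pow_succ]
      ring
    rw [sum_range_succ, ih, sum_congr rfl fun j _ => hsplit j, sum_add_distrib,
      sum_range_sub' (fun j => (-1) ^ j * T (n + 2 * j)), sum_range_succ _ (k + 1)]
    simp only [T, trinomialCoeff_eq_zero_of_lt (by omega : n + k + 1 < n + 2 * (k + 2)),
      trinomialCoeff_eq_zero_of_lt (by omega : n + k + 1 < n + 2 * (k + 1) + 1),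
      Nat.cast_zero, mul_zero, sub_zero, add_zero, pow_zero, one_mul, ← add_assoc]
    ring

theorem natCast_trinomialCoeff_eq_sum_filter {m a N : ℕ} (hN : m + a = N) :
    (trinomialCoeff m a : ℤ) =
      ∑ p ∈ (range (N + 1) ×ˢ range (N + 1)).filter (fun p => 2 * p.1 + p.2 = N ∧ a ≤ p.1),
        (m ! / (p.1 ! * p.2 ! * (p.1 - a)!) : ℤ) := by
  rw [sum_filter_two_mul_add_eq N a fun r s => (m ! / (r ! * s ! * (r - a)!) : ℤ),
    trinomialCoeff_eq_sum_multinomial, hN]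
  push_cast [Int.natCast_div]
  rfl

theorem hockey_stick_pascal_pyramid (n k : ℕ) :
    (∑ i ∈ Finset.range (k + 1),
        ∑ p ∈ (Finset.range (2 * n + i + 1) ×ˢ Finset.range (2 * n + i + 1)).filter
            (fun p => 2 * p.1 + p.2 = 2 * n + i ∧ n ≤ p.1),
          ((n + i).factorial / (p.1.factorial * p.2.factorial * (p.1 - n).factorial) : ℤ)) =
      ∑ j ∈ Finset.range (k / 2 + 1),
        (-1 : ℤ) ^ j *
          ∑ p ∈ (Finset.range (2 * n + k + 2 * j + 3) ×ˢ Finset.range (2 * n + k + 2 * j + 3)).filter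
              (fun p => 2 * p.1 + p.2 = 2 * n + k + 2 * j + 2 ∧ n + 2 * j + 1 ≤ p.1),
            ((n + k + 1).factorial /
              (p.1.factorial * p.2.factorial * (p.1 - (n + 2 * j + 1)).factorial) : ℤ) := by
  calc _ = ∑ i ∈ range (k + 1), (trinomialCoeff (n + i) n : ℤ) :=
        sum_congr rfl fun i _ => (natCast_trinomialCoeff_eq_sum_filter (by ring)).symm
    _ = ∑ j ∈ range (k + 1), (-1) ^ j * (trinomialCoeff (n + k + 1) (n + 2 * j + 1) : ℤ) :=
        sum_range_trinomialCoeff n k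
    _ = ∑ j ∈ range (k / 2 + 1), (-1) ^ j * (trinomialCoeff (n + k + 1) (n + 2 * j + 1) : ℤ) := by
        refine (sum_subset (range_subset_range.2 (by omega)) fun j _ hj => ?_).symm
        rw [mem_range] at hj
        rw [trinomialCoeff_eq_zero_of_lt (by omega), Nat.cast_zero, mul_zero]
    _ = _ := sum_congr rfl fun j _ =>
        congrArg ((-1) ^ j * ·) (natCast_trinomialCoeff_eq_sum_filter (by ring))
end
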